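/- Let B be a d×d complex matrix with B_ii = 1 for all i ∈ [d], and let 𝕁_d be the d×d all-ones matrix. Then for each i ∈ {1,2} the following are equivalent: (a) B is positive semidefinite (i.e. B is a correlation matrix); (b) X^{(i)}_{(𝕁_d, B)} is PPT; (c) X^{(i)}_{(𝕁_d, B)} is separable. -/

import Mathlib

open Matrix Kronecker
open scoped ComplexOrder

/-- The LDOI matrix `X^{(3)}_{(A,B,C)}` associated to a triple of `d × d` matrices. -/
def X3 {d : ℕ} (A B C : Matrix (Fin d) (Fin d) ℂ) :
    Matrix (Fin d × Fin d) (Fin d × Fin d) ℂ :=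
  Matrix.of fun p q =>
    if p.1 = q.1 ∧ p.2 = q.2 then A p.1 p.2
    else if p.1 = p.2 ∧ q.1 = q.2 then B p.1 q.1
    else if p.1 = q.2 ∧ p.2 = q.1 then C p.1 q.1
    else 0

/-- The LDUI matrix `X^{(1)}_{(A,B)} = X^{(3)}_{(A, diag A, B)}`. -/
def X1 {d : ℕ} (A B : Matrix (Fin d) (Fin d) ℂ) :
    Matrix (Fin d × Fin d) (Fin d × Fin d) ℂ :=
  X3 A (Matrix.diagonal fun i => A i i) B

/-- The CLDUI matrix `X^{(2)}_{(A,B)} = X^{(3)}_{(A, B, diag A)}`. -/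
def X2 {d : ℕ} (A B : Matrix (Fin d) (Fin d) ℂ) :
    Matrix (Fin d × Fin d) (Fin d × Fin d) ℂ :=
  X3 A B (Matrix.diagonal fun i => A i i)

/-- A bipartite matrix is separable if it is a finite sum of Kronecker products of
rank-one matrices `v v^*` and `w w^*`. -/
def Separable {d : ℕ} (X : Matrix (Fin d × Fin d) (Fin d × Fin d) ℂ) : Prop :=
  ∃ (n : ℕ) (v w : Fin n → Fin d → ℂ),
    X = ∑ k, (Matrix.vecMulVec (v k) (star (v k))) ⊗ₖ (Matrix.vecMulVec (w k) (star (w k)))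

/-- The partial transpose (on the second factor) of a bipartite matrix:
`⟨ik|X^Γ|jl⟩ = ⟨il|X|jk⟩`. -/
def partialTranspose {d : ℕ} (X : Matrix (Fin d × Fin d) (Fin d × Fin d) ℂ) :
    Matrix (Fin d × Fin d) (Fin d × Fin d) ℂ :=
  Matrix.of fun p q => X (p.1, q.2) (q.1, p.2)

/-- A bipartite matrix is PPT if both it and its partial transpose are
positive semidefinite. -/
def IsPPT {d : ℕ} (X : Matrix (Fin d × Fin d) (Fin d × Fin d) ℂ) : Prop :=
  X.PosSemidef ∧ (partialTranspose X).PosSemidef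

/-- The all-ones matrix `𝕁_d`. -/
def allOnes (d : ℕ) : Matrix (Fin d) (Fin d) ℂ := Matrix.of fun _ _ => 1

/-!
`X^{(2)}_{(𝕁,B)}` is the partial transpose of `X^{(1)}_{(𝕁,B)}`. Separability survives partial
transposition and implies PPT, and either PPT hypothesis makes `X^{(2)}_{(𝕁,B)}` positive
semidefinite; its compression to the span of the vectors `|ii⟩` is `B`, so `B ⪰ 0`.

Conversely, write `B = ∑ₘ uₘ uₘ^*` and let `eₐ` be the standard basis of `G = (ℤ/3)^d`. Averaging
the product states of `(ψ(eₐ) uₘ(a))ₐ` and `(ψ(eₐ))ₐ` over the characters `ψ` of `G`, orthogonality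
of characters keeps exactly the entries `⟨ij|·|kl⟩` with `eᵢ + eⱼ = eₖ + eₗ`, i.e. `{i, j} = {k, l}`
(over `ℤ/2` this would fail, as `2eᵢ = 0`), which is the support of `X^{(1)}_{(𝕁,B)}`.
-/

open scoped ComplexConjugate

section

variable {d : ℕ}

lemma partialTranspose_X3 (A B C : Matrix (Fin d) (Fin d) ℂ) :
    partialTranspose (X3 A B C) = X3 A C B := by
  ext ⟨i, k⟩ ⟨j, l⟩
  simp only [partialTranspose, X3, of_apply]
  split_ifs <;> grind

lemma partialTranspose_X1 (A B : Matrix (Fin d) (Fin d) ℂ) :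
    partialTranspose (X1 A B) = X2 A B :=
  partialTranspose_X3 _ _ _

lemma partialTranspose_sum {ι : Type*} (s : Finset ι)
    (X : ι → Matrix (Fin d × Fin d) (Fin d × Fin d) ℂ) :
    partialTranspose (∑ k ∈ s, X k) = ∑ k ∈ s, partialTranspose (X k) := by
  ext
  simp [partialTranspose, Matrix.sum_apply]

lemma partialTranspose_kronecker (P Q : Matrix (Fin d) (Fin d) ℂ) :
    partialTranspose (P ⊗ₖ Q) = P ⊗ₖ Qᵀ :=
  rfl

lemma Separable.partialTranspose {X : Matrix (Fin d × Fin d) (Fin d × Fin d) ℂ}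
    (h : Separable X) : Separable (partialTranspose X) := by
  obtain ⟨n, v, w, rfl⟩ := h
  refine ⟨n, v, fun k => star (w k), ?_⟩
  simp [partialTranspose_sum, partialTranspose_kronecker, transpose_vecMulVec]

lemma Separable.posSemidef {X : Matrix (Fin d × Fin d) (Fin d × Fin d) ℂ}
    (h : Separable X) : X.PosSemidef := by
  obtain ⟨n, v, w, rfl⟩ := h
  exact posSemidef_sum _ fun k _ =>
    (posSemidef_vecMulVec_self_star _).kronecker (posSemidef_vecMulVec_self_star _)

lemma Separable.isPPT {X : Matrix (Fin d × Fin d) (Fin d × Fin d) ℂ} (h : Separable X) :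
    IsPPT X :=
  ⟨h.posSemidef, h.partialTranspose.posSemidef⟩

lemma separable_sum {ι : Type*} [Fintype ι] (v w : ι → Fin d → ℂ) :
    Separable (∑ x, vecMulVec (v x) (star (v x)) ⊗ₖ vecMulVec (w x) (star (w x))) :=
  ⟨Fintype.card ι, v ∘ (Fintype.equivFin ι).symm, w ∘ (Fintype.equivFin ι).symm,
    (Equiv.sum_comp (Fintype.equivFin ι).symm _).symm⟩

lemma Separable.smul_of_nonneg {X : Matrix (Fin d × Fin d) (Fin d × Fin d) ℂ}
    (h : Separable X) {r : ℝ} (hr : 0 ≤ r) : Separable (r • X) := by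
  obtain ⟨n, v, w, rfl⟩ := h
  refine ⟨n, fun k => (√r : ℂ) • v k, w, ?_⟩
  simp [Finset.smul_sum, smul_vecMulVec, vecMulVec_smul, smul_kronecker, smul_smul,
    Real.mul_self_sqrt hr]

lemma X3_submatrix_diag (A B C : Matrix (Fin d) (Fin d) ℂ) (h : ∀ i, A i i = B i i) :
    (X3 A B C).submatrix (fun i => (i, i)) (fun i => (i, i)) = B := by
  ext i j
  by_cases hij : i = j
  · subst hij
    simp [X3, h]
  · simp [X3, hij]

lemma posSemidef_of_posSemidef_X2 {A B : Matrix (Fin d) (Fin d) ℂ} (h : ∀ i, A i i = B i i)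
    (hX : (X2 A B).PosSemidef) : B.PosSemidef :=
  X3_submatrix_diag A B _ h ▸ hX.submatrix _

lemma sum_addChar_kronecker_apply {G ι n : Type*} [AddCommGroup G] [Fintype G] [DecidableEq G]
    [Fintype ι] (e : n → G) (u : ι → n → ℂ) (i j k l : n) :
    (∑ x : AddChar G ℂ × ι,
        vecMulVec (fun a => x.1 (e a) * u x.2 a) (star fun a => x.1 (e a) * u x.2 a) ⊗ₖ
          vecMulVec (fun a => x.1 (e a)) (star fun a => x.1 (e a))) (i, j) (k, l) =
      if e i + e j = e k + e l then
        Fintype.card G * (∑ m, vecMulVec (u m) (star (u m))) i k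
      else 0 := by
  have hterm (ψ : AddChar G ℂ) (m : ι) :
      (vecMulVec (fun a => ψ (e a) * u m a) (star fun a => ψ (e a) * u m a) ⊗ₖ
          vecMulVec (fun a => ψ (e a)) (star fun a => ψ (e a))) (i, j) (k, l) =
        ψ (e i + e j - (e k + e l)) * (u m i * conj (u m k)) := by
    simp only [kroneckerMap_apply, vecMulVec_apply, Pi.star_apply, star_mul', RCLike.star_def,
      ← AddChar.map_neg_eq_conj, neg_add, sub_eq_add_neg, AddChar.map_add_eq_mul]
    ring
  simp only [Matrix.sum_apply, Fintype.sum_prod_type, hterm, ← Finset.mul_sum, ← Finset.sum_mul,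
    AddChar.sum_apply_eq_ite, sub_eq_zero, vecMulVec_apply, Pi.star_apply, RCLike.star_def]
  split_ifs <;> simp

lemma X1_allOnes_apply {B : Matrix (Fin d) (Fin d) ℂ} (hdiag : ∀ i, B i i = 1) (i j k l : Fin d) :
    X1 (allOnes d) B (i, j) (k, l) = if (i = k ∧ j = l) ∨ (i = l ∧ j = k) then B i k else 0 := by
  simp only [X1, X3, allOnes, of_apply, diagonal_apply]
  split_ifs <;> grind

lemma zmod3_single_add_single_eq_iff (i j k l : Fin d) :
    (Pi.single i 1 + Pi.single j 1 : Fin d → ZMod 3) = Pi.single k 1 + Pi.single l 1 ↔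
      (i = k ∧ j = l) ∨ (i = l ∧ j = k) := by
  have htwo : (1 + 1 : ZMod 3) ≠ 0 := by decide
  simp [Pi.single_add_single_eq_single_add_single one_ne_zero one_ne_zero, htwo]

lemma separable_X1_allOnes {B : Matrix (Fin d) (Fin d) ℂ} (hdiag : ∀ i, B i i = 1)
    (hB : B.PosSemidef) : Separable (X1 (allOnes d) B) := by
  obtain ⟨m, u, hu⟩ := posSemidef_iff_eq_sum_vecMulVec.mp hB
  have hX1 : X1 (allOnes d) B =
      (Fintype.card (Fin d → ZMod 3) : ℝ)⁻¹ • ∑ x : AddChar (Fin d → ZMod 3) ℂ × Fin m,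
        vecMulVec (fun a => x.1 (Pi.single a 1) * u x.2 a)
          (star fun a => x.1 (Pi.single a 1) * u x.2 a) ⊗ₖ
        vecMulVec (fun a => x.1 (Pi.single a 1)) (star fun a => x.1 (Pi.single a 1)) := by
    ext ⟨i, j⟩ ⟨k, l⟩
    rw [Matrix.smul_apply, sum_addChar_kronecker_apply, X1_allOnes_apply hdiag, ← hu]
    simp only [zmod3_single_add_single_eq_iff]
    split_ifs <;> simp
  rw [hX1]
  exact (separable_sum _ _).smul_of_nonneg (by positivity)

end

theorem stmt10 {d : ℕ} (B : Matrix (Fin d) (Fin d) ℂ)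
    (hdiag : ∀ i, B i i = 1) :
    [B.PosSemidef, IsPPT (X1 (allOnes d) B), Separable (X1 (allOnes d) B)].TFAE ∧
    [B.PosSemidef, IsPPT (X2 (allOnes d) B), Separable (X2 (allOnes d) B)].TFAE := by
  have hJ : ∀ i, allOnes d i i = B i i := fun i => (hdiag i).symm
  constructor
  · tfae_have 1 → 3 := separable_X1_allOnes hdiag
    tfae_have 3 → 2 := Separable.isPPT
    tfae_have 2 → 1 := fun h => posSemidef_of_posSemidef_X2 hJ (partialTranspose_X1 _ B ▸ h.2)
    tfae_finish
  · tfae_have 1 → 3 := fun h =>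
      partialTranspose_X1 _ B ▸ (separable_X1_allOnes hdiag h).partialTranspose
    tfae_have 3 → 2 := Separable.isPPT
    tfae_have 2 → 1 := fun h => posSemidef_of_posSemidef_X2 hJ h.1
    tfae_finish
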